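/- arXiv:1512.04784 — 4 statements merged into one kernel-verified Lean document; each statement's English description precedes it below -/
import Mathlib

section
/- Let 0 < p ≤ 1, ε > 0, and m ≥ 1. For any fixed point z⁰ ∈ ℝ^m, define the weights ω_i := (p/2)((z⁰_i)² + ε²)^{p/2 − 1} for i = 1,…,m. Then for every z ∈ ℝ^m, f_p(z; ε) − Σ_{i=1}^m ω_i z_i² ≤ f_p(z⁰; ε) − Σ_{i=1}^m ω_i (z⁰_i)². In other words, the approximation error f_p(z; ε) − Q(z; ω) between the smoothed ℓ_p function and the majorizing quadratic Q(z; ω) := Σ_i ω_i z_i² attains its maximum over ℝ^m at z = z⁰. -/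
open Finset

lemma rpow_concave_tangent {q a b : ℝ} (hq : 0 < q) (hq1 : q ≤ 1)
    (ha : 0 < a) (hb : 0 < b) :
    a ^ q - q * b ^ (q - 1) * a ≤ b ^ q - q * b ^ (q - 1) * b := by
  have hs : (-1 : ℝ) ≤ a / b - 1 := by
    have : 0 ≤ a / b := by positivity
    linarith
  have key := rpow_one_add_le_one_add_mul_self hs hq.le hq1
  rw [add_sub_cancel] at key
  have h2 : (a / b) ^ q ≤ 1 + q * (a / b - 1) := key
  have h3 : b ^ q * (a / b) ^ q ≤ b ^ q * (1 + q * (a / b - 1)) := by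
    exact mul_le_mul_of_nonneg_left h2 (by positivity)
  have hdiv : b ^ q * (a / b) ^ q = a ^ q := by
    rw [← Real.mul_rpow hb.le (by positivity), mul_div_cancel₀ _ hb.ne']
  rw [hdiv] at h3
  have hbm : b ^ (q - 1) = b ^ q / b := by
    rw [Real.rpow_sub hb, Real.rpow_one]
  have hbq : b ^ (q - 1) * b = b ^ q := by
    rw [hbm]; field_simp
  have hbq2 : b ^ (q - 1) * a = b ^ q * (a / b) := by
    rw [hbm]; ring
  nlinarith [h3]

/-- The MM majorization property: the approximation error between the smoothed
ℓ_p function `f_p(z; ε) = ∑ i, (z_i² + ε²)^(p/2)` and the majorizing quadratic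
`Q(z; ω) = ∑ i, ω_i z_i²` (with MM weights computed at `z⁰`) attains its maximum
over `ℝ^m` at `z = z⁰`. -/
theorem smoothed_lp_majorization (m : ℕ) (hm : 1 ≤ m) (p ε : ℝ)
    (hp : 0 < p) (hp1 : p ≤ 1) (hε : 0 < ε) (z0 z : Fin m → ℝ) :
    (∑ i, ((z i) ^ 2 + ε ^ 2) ^ (p / 2))
        - ∑ i, (p / 2 * ((z0 i) ^ 2 + ε ^ 2) ^ (p / 2 - 1)) * (z i) ^ 2
      ≤ (∑ i, ((z0 i) ^ 2 + ε ^ 2) ^ (p / 2))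
        - ∑ i, (p / 2 * ((z0 i) ^ 2 + ε ^ 2) ^ (p / 2 - 1)) * (z0 i) ^ 2 := by
  rw [← Finset.sum_sub_distrib, ← Finset.sum_sub_distrib]
  apply Finset.sum_le_sum
  intro i _
  have h := rpow_concave_tangent (q := p / 2) (a := (z i) ^ 2 + ε ^ 2)
    (b := (z0 i) ^ 2 + ε ^ 2) (by linarith) (by linarith) (by positivity)
    (by positivity)
  nlinarith [h, Real.rpow_pos_of_pos (show (0:ℝ) < (z0 i)^2 + ε^2 by positivity) (p/2 - 1)]
end

section
/- Let 0 < p ≤ 1, ε > 0, and let C ⊆ ℝ^m be a nonempty set. Let (z^n)_{n≥0} be a sequence in C such that for every n, z^{n+1} minimizes Q(z; ω^n) = Σ_{i=1}^m ω_i^n z_i² over C, where ω_i^n := (p/2)((z^n_i)² + ε²)^{p/2 − 1}. Then the sequence of objective values (f_p(z^n; ε))_{n≥0} is monotonically nonincreasing, is bounded below by m·ε^p, and converges to a finite limit. -/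
open Finset Filter

/-- Tangent line inequality for concave `rpow`. -/
lemma rpow_tangent_le {q a b : ℝ} (hq : 0 ≤ q) (hq1 : q ≤ 1) (ha : 0 < a) (hb : 0 ≤ b) :
    b ^ q ≤ a ^ q + q * a ^ (q - 1) * (b - a) := by
  have hs : (-1 : ℝ) ≤ b / a - 1 := by
    have : 0 ≤ b / a := div_nonneg hb ha.le
    linarith
  have key := rpow_one_add_le_one_add_mul_self hs hq hq1
  have h1 : (1 : ℝ) + (b / a - 1) = b / a := by ring
  rw [h1] at key
  have hmul := mul_le_mul_of_nonneg_right key (Real.rpow_nonneg ha.le q)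
  have hleft : (b / a) ^ q * a ^ q = b ^ q := by
    rw [Real.div_rpow hb ha.le, div_mul_cancel₀]
    exact (Real.rpow_pos_of_pos ha q).ne'
  have hright : (1 + q * (b / a - 1)) * a ^ q = a ^ q + q * a ^ (q - 1) * (b - a) := by
    have haq : a ^ (q - 1) = a ^ q / a := by
      rw [Real.rpow_sub ha, Real.rpow_one]
    rw [haq]
    field_simp
  rw [hleft, hright] at hmul
  exact hmul

/-- For the iterative reweighted-ℓ₂ algorithm, the sequence of smoothed ℓ_p
objective values is monotonically nonincreasing, bounded below by `m·ε^p`,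
and converges to a finite limit. -/
theorem mm_objective_converges (m : ℕ) (p ε : ℝ) (hp : 0 < p) (hp1 : p ≤ 1) (hε : 0 < ε)
    (C : Set (Fin m → ℝ)) (hC : C.Nonempty)
    (z : ℕ → Fin m → ℝ) (hzC : ∀ n, z n ∈ C)
    (hmin : ∀ n, ∀ x ∈ C,
      ∑ i, (p / 2 * ((z n i) ^ 2 + ε ^ 2) ^ (p / 2 - 1)) * (z (n + 1) i) ^ 2
        ≤ ∑ i, (p / 2 * ((z n i) ^ 2 + ε ^ 2) ^ (p / 2 - 1)) * (x i) ^ 2) :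
    Antitone (fun n => ∑ i, ((z n i) ^ 2 + ε ^ 2) ^ (p / 2)) ∧
    (∀ n, (m : ℝ) * ε ^ p ≤ ∑ i, ((z n i) ^ 2 + ε ^ 2) ^ (p / 2)) ∧
    (∃ L : ℝ, Tendsto (fun n => ∑ i, ((z n i) ^ 2 + ε ^ 2) ^ (p / 2)) atTop (nhds L)) := by
  set g : ℕ → ℝ := fun n => ∑ i, ((z n i) ^ 2 + ε ^ 2) ^ (p / 2) with hg
  have hq0 : 0 ≤ p / 2 := by linarith
  have hq1 : p / 2 ≤ 1 := by linarith
  have hpos : ∀ n (i : Fin m), 0 < (z n i) ^ 2 + ε ^ 2 := fun n i => by positivity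
  -- descent
  have hdesc : ∀ n, g (n + 1) ≤ g n := by
    intro n
    have hterm : ∀ i : Fin m,
        ((z (n + 1) i) ^ 2 + ε ^ 2) ^ (p / 2)
          ≤ ((z n i) ^ 2 + ε ^ 2) ^ (p / 2)
            + p / 2 * ((z n i) ^ 2 + ε ^ 2) ^ (p / 2 - 1)
              * (((z (n + 1) i) ^ 2 + ε ^ 2) - ((z n i) ^ 2 + ε ^ 2)) := by
      intro i
      exact rpow_tangent_le hq0 hq1 (hpos n i) (by positivity)
    calc g (n + 1) ≤ ∑ i, (((z n i) ^ 2 + ε ^ 2) ^ (p / 2)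
            + p / 2 * ((z n i) ^ 2 + ε ^ 2) ^ (p / 2 - 1)
              * (((z (n + 1) i) ^ 2 + ε ^ 2) - ((z n i) ^ 2 + ε ^ 2))) :=
          Finset.sum_le_sum fun i _ => hterm i
      _ = g n + (∑ i, (p / 2 * ((z n i) ^ 2 + ε ^ 2) ^ (p / 2 - 1)) * (z (n + 1) i) ^ 2
            - ∑ i, (p / 2 * ((z n i) ^ 2 + ε ^ 2) ^ (p / 2 - 1)) * (z n i) ^ 2) := by
          rw [hg]
          simp only [Finset.sum_add_distrib, ← Finset.sum_sub_distrib]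
          congr 1
          apply Finset.sum_congr rfl
          intro i _
          ring
      _ ≤ g n := by
          have := hmin n (z n) (hzC n)
          linarith
  have hanti : Antitone g := antitone_nat_of_succ_le hdesc
  have hlb : ∀ n, (m : ℝ) * ε ^ p ≤ g n := by
    intro n
    have hterm : ∀ i : Fin m, ε ^ p ≤ ((z n i) ^ 2 + ε ^ 2) ^ (p / 2) := by
      intro i
      have h1 : (ε ^ 2 : ℝ) ^ (p / 2) ≤ ((z n i) ^ 2 + ε ^ 2) ^ (p / 2) :=
        Real.rpow_le_rpow (by positivity) (by nlinarith [sq_nonneg (z n i)]) hq0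
      have h2 : (ε ^ 2 : ℝ) ^ (p / 2) = ε ^ p := by
        rw [← Real.rpow_natCast ε 2, ← Real.rpow_mul hε.le]
        norm_num
        congr 1
        ring
      linarith
    calc (m : ℝ) * ε ^ p = ∑ _i : Fin m, ε ^ p := by
          rw [Finset.sum_const, Finset.card_univ, Fintype.card_fin, nsmul_eq_mul]
      _ ≤ g n := Finset.sum_le_sum fun i _ => hterm i
  refine ⟨hanti, hlb, ⟨⨅ n, g n, ?_⟩⟩
  exact tendsto_atTop_ciInf hanti ⟨(m : ℝ) * ε ^ p, fun x ⟨n, hn⟩ => hn ▸ hlb n⟩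
end

section
/- Let 0 < p ≤ 1, ε > 0, and let C ⊆ ℝ^m be a nonempty closed convex set. Let (z^n)_{n≥0} be a sequence in C such that for every n, z^{n+1} minimizes Q(z; ω^n) = Σ_{i=1}^m ω_i^n z_i² over C, where ω_i^n := (p/2)((z^n_i)² + ε²)^{p/2 − 1}. Suppose there is a subsequence (n_k) and a point z̄ ∈ ℝ^m such that z^{n_k} → z̄ and z^{n_k + 1} → z̄ as k → ∞. Then z̄ ∈ C and z̄ is a KKT point of the problem of minimizing f_p(z; ε) over C; that is, for all x ∈ C, Σ_{i=1}^m p·z̄_i·(z̄_i² + ε²)^{p/2 − 1}·(x_i − z̄_i) ≥ 0. -/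
open Finset Filter

/-- Variational inequality for a minimizer of a nonnegative diagonal quadratic
over a convex set. -/
lemma quad_min_vi (m : ℕ) (C : Set (Fin m → ℝ)) (hconv : Convex ℝ C)
    (ω : Fin m → ℝ) (hω : ∀ i, 0 ≤ ω i) (a : Fin m → ℝ) (ha : a ∈ C)
    (hmin : ∀ x ∈ C, ∑ i, ω i * (a i) ^ 2 ≤ ∑ i, ω i * (x i) ^ 2)
    (x : Fin m → ℝ) (hx : x ∈ C) :
    0 ≤ ∑ i, ω i * a i * (x i - a i) := by
  set S := ∑ i, ω i * a i * (x i - a i) with hS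
  set B := ∑ i, ω i * (x i - a i) ^ 2 with hB
  have hB0 : 0 ≤ B := Finset.sum_nonneg fun i _ => mul_nonneg (hω i) (sq_nonneg _)
  have key : ∀ n : ℕ, 0 ≤ 2 * S + (1 / (n + 1 : ℝ)) * B := by
    intro n
    set t : ℝ := 1 / (n + 1 : ℝ) with ht
    have ht0 : 0 < t := by positivity
    have ht1 : t ≤ 1 := by
      rw [ht, div_le_one (by positivity)]; linarith [Nat.cast_nonneg (α := ℝ) n]
    have hy : (fun i => a i + t * (x i - a i)) ∈ C := by
      have := hconv ha hx (by linarith : (0:ℝ) ≤ 1 - t) (le_of_lt ht0) (by ring)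
      convert this using 1
      funext i
      simp [smul_eq_mul]
      ring
    have h := hmin _ hy
    have id1 : ∑ i, ω i * ((fun i => a i + t * (x i - a i)) i) ^ 2
        = ∑ i, ω i * (a i) ^ 2 + t * (2 * S + t * B) := by
      rw [hS, hB, Finset.mul_sum, Finset.mul_sum, mul_add, Finset.mul_sum, Finset.mul_sum,
        ← Finset.sum_add_distrib, ← Finset.sum_add_distrib]
      exact Finset.sum_congr rfl fun i _ => by ring
    rw [id1] at h
    have h2 : 0 ≤ t * (2 * S + t * B) := by linarith
    exact nonneg_of_mul_nonneg_left (by linarith [h2] : 0 ≤ (2 * S + t * B) * t) ht0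
  have hlim : Tendsto (fun n : ℕ => 2 * S + (1 / (n + 1 : ℝ)) * B) atTop (nhds (2 * S)) := by
    have h1 : Tendsto (fun n : ℕ => (1 / (n + 1 : ℝ)) * B) atTop (nhds (0 * B)) :=
      tendsto_one_div_add_atTop_nhds_zero_nat.mul_const B
    simpa using tendsto_const_nhds.add h1
  have := ge_of_tendsto' hlim key
  linarith

/-- Any limit point (along a subsequence, together with its successor iterates)
of the iterative reweighted-ℓ₂ algorithm is a KKT point of minimizing the
smoothed ℓ_p function `f_p(·; ε)` over the nonempty closed convex set `C`:
`⟨∇f_p(z̄; ε), x − z̄⟩ ≥ 0` for all `x ∈ C`. -/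
theorem mm_limit_is_kkt (m : ℕ) (p ε : ℝ) (hp : 0 < p) (hp1 : p ≤ 1) (hε : 0 < ε)
    (C : Set (Fin m → ℝ)) (hC : C.Nonempty) (hclosed : IsClosed C) (hconv : Convex ℝ C)
    (z : ℕ → Fin m → ℝ) (hzC : ∀ n, z n ∈ C)
    (hmin : ∀ n, ∀ x ∈ C,
      ∑ i, (p / 2 * ((z n i) ^ 2 + ε ^ 2) ^ (p / 2 - 1)) * (z (n + 1) i) ^ 2
        ≤ ∑ i, (p / 2 * ((z n i) ^ 2 + ε ^ 2) ^ (p / 2 - 1)) * (x i) ^ 2)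
    (nk : ℕ → ℕ) (hnk : StrictMono nk) (zbar : Fin m → ℝ)
    (hlim1 : Tendsto (fun k => z (nk k)) atTop (nhds zbar))
    (hlim2 : Tendsto (fun k => z (nk k + 1)) atTop (nhds zbar)) :
    zbar ∈ C ∧
    ∀ x ∈ C, 0 ≤ ∑ i, p * zbar i * ((zbar i) ^ 2 + ε ^ 2) ^ (p / 2 - 1) * (x i - zbar i) := by
  have hzbarC : zbar ∈ C :=
    hclosed.mem_of_tendsto hlim1 (Filter.Eventually.of_forall fun k => hzC (nk k))
  refine ⟨hzbarC, fun x hx => ?_⟩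
  -- variational inequality along the subsequence
  have hvi : ∀ k : ℕ, 0 ≤ ∑ i,
      (p / 2 * ((z (nk k) i) ^ 2 + ε ^ 2) ^ (p / 2 - 1)) * (z (nk k + 1) i)
        * (x i - z (nk k + 1) i) := by
    intro k
    exact quad_min_vi m C hconv _
      (fun i => mul_nonneg (by positivity)
        (Real.rpow_nonneg (by positivity) _))
      (z (nk k + 1)) (hzC (nk k + 1)) (hmin (nk k)) x hx
  -- limit of the variational inequality
  set L := ∑ i, (p / 2 * ((zbar i) ^ 2 + ε ^ 2) ^ (p / 2 - 1)) * zbar i * (x i - zbar i) with hL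
  have htend : Tendsto (fun k => ∑ i,
      (p / 2 * ((z (nk k) i) ^ 2 + ε ^ 2) ^ (p / 2 - 1)) * (z (nk k + 1) i)
        * (x i - z (nk k + 1) i)) atTop (nhds L) := by
    rw [hL]
    apply tendsto_finset_sum
    intro i _
    have h1i : Tendsto (fun k => z (nk k) i) atTop (nhds (zbar i)) :=
      (tendsto_pi_nhds.mp hlim1) i
    have h2i : Tendsto (fun k => z (nk k + 1) i) atTop (nhds (zbar i)) :=
      (tendsto_pi_nhds.mp hlim2) i
    have hbase : Tendsto (fun k => (z (nk k) i) ^ 2 + ε ^ 2) atTop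
        (nhds ((zbar i) ^ 2 + ε ^ 2)) := (h1i.pow 2).add tendsto_const_nhds
    have hpos : (0:ℝ) < (zbar i) ^ 2 + ε ^ 2 := by positivity
    have hrpow : Tendsto (fun k => ((z (nk k) i) ^ 2 + ε ^ 2) ^ (p / 2 - 1)) atTop
        (nhds (((zbar i) ^ 2 + ε ^ 2) ^ (p / 2 - 1))) :=
      hbase.rpow_const (Or.inl (ne_of_gt hpos))
    exact (((tendsto_const_nhds.mul hrpow).mul h2i).mul (tendsto_const_nhds.sub h2i))
  have hL0 : 0 ≤ L := ge_of_tendsto' htend hvi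
  have hfin : ∑ i, p * zbar i * ((zbar i) ^ 2 + ε ^ 2) ^ (p / 2 - 1) * (x i - zbar i)
      = 2 * L := by
    rw [hL, Finset.mul_sum]
    exact Finset.sum_congr rfl fun i _ => by ring
  rw [hfin]
  linarith
end

section
/- Let 0 < p ≤ 1, ε > 0, and let C ⊆ ℝ^m be a nonempty closed convex set. Let (z^n)_{n≥0} be a sequence in C such that for every n, z^{n+1} minimizes Q(z; ω^n) = Σ_{i=1}^m ω_i^n z_i² over C, where ω_i^n := (p/2)((z^n_i)² + ε²)^{p/2 − 1}. Suppose there is a subsequence (n_k) and a point z̄ with z^{n_k} → z̄ and z^{n_k+1} → z̄. Then the full sequence of objective values f_p(z^n; ε) converges monotonically (nonincreasingly) to f_p(z̄; ε), and z̄ is a KKT point of minimizing f_p(·; ε) over C. -/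
open Finset Filter

lemma tangent_ineq (q : ℝ) (hq0 : 0 < q) (hq1 : q ≤ 1) {u v : ℝ} (hu : 0 < u) (hv : 0 < v) :
    v ^ q ≤ u ^ q + q * u ^ (q - 1) * (v - u) := by
  have h1 : (-1 : ℝ) ≤ v / u - 1 := by
    have : 0 < v / u := div_pos hv hu
    linarith
  have hB := rpow_one_add_le_one_add_mul_self h1 hq0.le hq1
  rw [add_sub_cancel] at hB
  have hvu : v ^ q = u ^ q * (v / u) ^ q := by
    rw [← Real.mul_rpow hu.le (div_pos hv hu).le, mul_div_cancel₀ _ hu.ne']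
  have hupos : (0:ℝ) < u ^ q := Real.rpow_pos_of_pos hu q
  have key : u ^ q * (v / u) ^ q ≤ u ^ q * (1 + q * (v / u - 1)) :=
    mul_le_mul_of_nonneg_left hB hupos.le
  have hrw : u ^ q * (1 + q * (v / u - 1)) = u ^ q + q * u ^ (q - 1) * (v - u) := by
    have h2 : u ^ (q - 1) = u ^ q / u := by
      rw [Real.rpow_sub hu, Real.rpow_one]
    rw [h2]; field_simp
  rw [hvu]
  calc u ^ q * (v / u) ^ q ≤ u ^ q * (1 + q * (v / u - 1)) := key
    _ = u ^ q + q * u ^ (q - 1) * (v - u) := hrw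

/-- For the iterative reweighted-ℓ₂ algorithm with a convergent subsequence
(whose successor iterates converge to the same point `z̄`), the full sequence of
objective values `f_p(z^n; ε)` converges monotonically (nonincreasingly) to
`f_p(z̄; ε)`, and `z̄` is a KKT point of minimizing `f_p(·; ε)` over `C`. -/
theorem mm_objective_tendsto_kkt (m : ℕ) (p ε : ℝ) (hp : 0 < p) (hp1 : p ≤ 1) (hε : 0 < ε)
    (C : Set (Fin m → ℝ)) (hC : C.Nonempty) (hclosed : IsClosed C) (hconv : Convex ℝ C)
    (z : ℕ → Fin m → ℝ) (hzC : ∀ n, z n ∈ C)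
    (hmin : ∀ n, ∀ x ∈ C,
      ∑ i, (p / 2 * ((z n i) ^ 2 + ε ^ 2) ^ (p / 2 - 1)) * (z (n + 1) i) ^ 2
        ≤ ∑ i, (p / 2 * ((z n i) ^ 2 + ε ^ 2) ^ (p / 2 - 1)) * (x i) ^ 2)
    (nk : ℕ → ℕ) (hnk : StrictMono nk) (zbar : Fin m → ℝ)
    (hlim1 : Tendsto (fun k => z (nk k)) atTop (nhds zbar))
    (hlim2 : Tendsto (fun k => z (nk k + 1)) atTop (nhds zbar)) :
    Antitone (fun n => ∑ i, ((z n i) ^ 2 + ε ^ 2) ^ (p / 2)) ∧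
    Tendsto (fun n => ∑ i, ((z n i) ^ 2 + ε ^ 2) ^ (p / 2)) atTop
      (nhds (∑ i, ((zbar i) ^ 2 + ε ^ 2) ^ (p / 2))) ∧
    zbar ∈ C ∧
    (∀ x ∈ C, 0 ≤ ∑ i, p * zbar i * ((zbar i) ^ 2 + ε ^ 2) ^ (p / 2 - 1) * (x i - zbar i)) := by
  set q : ℝ := p / 2 with hq
  have hq0 : 0 < q := by positivity
  have hq1 : q ≤ 1 := by rw [hq]; linarith
  have hpos : ∀ (w : Fin m → ℝ) (i : Fin m), 0 < (w i) ^ 2 + ε ^ 2 := fun w i => by positivity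
  set a : ℕ → ℝ := fun n => ∑ i, ((z n i) ^ 2 + ε ^ 2) ^ q with ha
  -- Step 1: Antitone
  have hstep : ∀ n, a (n + 1) ≤ a n := by
    intro n
    have h1 : a (n + 1) ≤ ∑ i, (((z n i) ^ 2 + ε ^ 2) ^ q
        + q * ((z n i) ^ 2 + ε ^ 2) ^ (q - 1) * (((z (n+1) i) ^ 2 + ε ^ 2) - ((z n i) ^ 2 + ε ^ 2))) :=
      Finset.sum_le_sum fun i _ => tangent_ineq q hq0 hq1 (hpos (z n) i) (hpos (z (n+1)) i)
    have h2 := hmin n (z n) (hzC n)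
    have h3 : ∑ i, (((z n i) ^ 2 + ε ^ 2) ^ q
        + q * ((z n i) ^ 2 + ε ^ 2) ^ (q - 1) * (((z (n+1) i) ^ 2 + ε ^ 2) - ((z n i) ^ 2 + ε ^ 2)))
        = a n + ((∑ i, (q * ((z n i) ^ 2 + ε ^ 2) ^ (q - 1)) * (z (n + 1) i) ^ 2)
            - ∑ i, (q * ((z n i) ^ 2 + ε ^ 2) ^ (q - 1)) * (z n i) ^ 2) := by
      rw [ha]
      rw [Finset.sum_add_distrib, ← Finset.sum_sub_distrib]
      congr 1
      apply Finset.sum_congr rfl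
      intro i _
      ring
    rw [h3] at h1
    have h4 : (∑ i, (q * ((z n i) ^ 2 + ε ^ 2) ^ (q - 1)) * (z (n + 1) i) ^ 2)
        ≤ ∑ i, (q * ((z n i) ^ 2 + ε ^ 2) ^ (q - 1)) * (z n i) ^ 2 := by
      simpa [hq] using h2
    linarith
  have hanti : Antitone a := antitone_nat_of_succ_le hstep
  -- continuity: a (nk k) → L
  have hcoord1 : ∀ i, Tendsto (fun k => z (nk k) i) atTop (nhds (zbar i)) := by
    intro i
    exact (tendsto_pi_nhds.mp hlim1) i
  have hcoord2 : ∀ i, Tendsto (fun k => z (nk k + 1) i) atTop (nhds (zbar i)) := by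
    intro i
    exact (tendsto_pi_nhds.mp hlim2) i
  set L : ℝ := ∑ i, ((zbar i) ^ 2 + ε ^ 2) ^ q with hL
  have hrpow_tend : ∀ (r : ℝ) (i : Fin m),
      Tendsto (fun k => ((z (nk k) i) ^ 2 + ε ^ 2) ^ r) atTop (nhds (((zbar i) ^ 2 + ε ^ 2) ^ r)) := by
    intro r i
    have hb : Tendsto (fun k => (z (nk k) i) ^ 2 + ε ^ 2) atTop (nhds ((zbar i) ^ 2 + ε ^ 2)) :=
      (((hcoord1 i).pow 2).add tendsto_const_nhds)
    exact ((Real.continuousAt_rpow_const _ r (Or.inl (hpos zbar i).ne')).tendsto).comp hb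
  have hsubL : Tendsto (fun k => a (nk k)) atTop (nhds L) := by
    apply tendsto_finset_sum
    intro i _
    exact hrpow_tend q i
  -- a n ≥ L for all n
  have hLb : ∀ n, L ≤ a n := by
    intro n
    have h1 : L ≤ a (nk n) := by
      apply le_of_tendsto hsubL
      filter_upwards [eventually_ge_atTop n] with k hk
      exact hanti (hnk.monotone hk)
    exact h1.trans (hanti (hnk.le_apply))
  have hbdd : BddBelow (Set.range a) := ⟨L, by rintro x ⟨n, rfl⟩; exact hLb n⟩
  have htend : Tendsto a atTop (nhds (⨅ n, a n)) := tendsto_atTop_ciInf hanti hbdd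
  have hLeq : L = ⨅ n, a n :=
    tendsto_nhds_unique hsubL (htend.comp hnk.tendsto_atTop)
  have htendL : Tendsto a atTop (nhds L) := hLeq ▸ htend
  -- zbar ∈ C
  have hzbarC : zbar ∈ C := hclosed.mem_of_tendsto hlim1 (Eventually.of_forall fun k => hzC (nk k))
  refine ⟨hanti, htendL, hzbarC, ?_⟩
  -- KKT
  intro x hx
  set A : ℝ := ∑ i, (q * ((zbar i) ^ 2 + ε ^ 2) ^ (q - 1)) * (zbar i * (x i - zbar i)) with hA
  set B : ℝ := ∑ i, (q * ((zbar i) ^ 2 + ε ^ 2) ^ (q - 1)) * (x i - zbar i) ^ 2 with hB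
  have key : ∀ t : ℝ, 0 < t → t ≤ 1 → 0 ≤ 2 * A + t * B := by
    intro t ht ht1
    -- for each k, inequality with z (nk k)
    have hk : ∀ k, 0 ≤ 2 * (∑ i, (q * ((z (nk k) i) ^ 2 + ε ^ 2) ^ (q - 1)) * (z (nk k + 1) i * (x i - z (nk k + 1) i)))
        + t * (∑ i, (q * ((z (nk k) i) ^ 2 + ε ^ 2) ^ (q - 1)) * (x i - z (nk k + 1) i) ^ 2) := by
      intro k
      set n := nk k
      set y : Fin m → ℝ := fun i => z (n + 1) i + t * (x i - z (n + 1) i) with hy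
      have hyC : y ∈ C := by
        have := hconv (hzC (n+1)) hx (by linarith : (0:ℝ) ≤ 1 - t) ht.le (by ring)
        convert this using 1
        funext i
        simp [hy]
        ring
      have h := hmin n y hyC
      have hq2 : ∀ i, (y i) ^ 2 = (z (n+1) i) ^ 2 + (2 * t * (z (n+1) i * (x i - z (n+1) i)) + t^2 * (x i - z (n+1) i)^2) := by
        intro i; simp [hy]; ring
      have h2 : ∑ i, (p / 2 * ((z n i) ^ 2 + ε ^ 2) ^ (p / 2 - 1)) * (y i) ^ 2
          = ∑ i, (p / 2 * ((z n i) ^ 2 + ε ^ 2) ^ (p / 2 - 1)) * (z (n+1) i) ^ 2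
            + (2 * t * (∑ i, (q * ((z n i) ^ 2 + ε ^ 2) ^ (q - 1)) * (z (n + 1) i * (x i - z (n + 1) i)))
              + t^2 * (∑ i, (q * ((z n i) ^ 2 + ε ^ 2) ^ (q - 1)) * (x i - z (n + 1) i) ^ 2)) := by
        rw [Finset.mul_sum, Finset.mul_sum, ← Finset.sum_add_distrib, ← Finset.sum_add_distrib]
        apply Finset.sum_congr rfl
        intro i _
        rw [hq2 i]
        simp only [hq]
        ring
      rw [h2] at h
      have h3 : 0 ≤ 2 * t * (∑ i, (q * ((z n i) ^ 2 + ε ^ 2) ^ (q - 1)) * (z (n + 1) i * (x i - z (n + 1) i)))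
          + t^2 * (∑ i, (q * ((z n i) ^ 2 + ε ^ 2) ^ (q - 1)) * (x i - z (n + 1) i) ^ 2) := by
        linarith
      have := div_nonneg h3 ht.le
      nlinarith [h3, sq_nonneg t]
    -- take limit k → ∞
    have hAk : Tendsto (fun k => ∑ i, (q * ((z (nk k) i) ^ 2 + ε ^ 2) ^ (q - 1)) * (z (nk k + 1) i * (x i - z (nk k + 1) i))) atTop (nhds A) := by
      apply tendsto_finset_sum
      intro i _
      exact (((hrpow_tend (q-1) i).const_mul q).mul ((hcoord2 i).mul (tendsto_const_nhds.sub (hcoord2 i))))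
    have hBk : Tendsto (fun k => ∑ i, (q * ((z (nk k) i) ^ 2 + ε ^ 2) ^ (q - 1)) * (x i - z (nk k + 1) i) ^ 2) atTop (nhds B) := by
      apply tendsto_finset_sum
      intro i _
      exact (((hrpow_tend (q-1) i).const_mul q).mul ((tendsto_const_nhds.sub (hcoord2 i)).pow 2))
    have := ((hAk.const_mul 2).add (hBk.const_mul t))
    exact ge_of_tendsto this (Eventually.of_forall hk)
  -- let t → 0
  have hA0 : 0 ≤ 2 * A := by
    have hseq : Tendsto (fun j : ℕ => 2 * A + (1 / (j + 1 : ℝ)) * B) atTop (nhds (2 * A)) := by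
      have : Tendsto (fun j : ℕ => (1 / (j + 1 : ℝ))) atTop (nhds 0) :=
        tendsto_one_div_add_atTop_nhds_zero_nat
      simpa using (tendsto_const_nhds.add (this.mul_const B))
    apply ge_of_tendsto hseq
    filter_upwards with j
    apply key
    · positivity
    · rw [div_le_one (by positivity)]; linarith [Nat.cast_nonneg (α := ℝ) j]
  have : ∑ i, p * zbar i * ((zbar i) ^ 2 + ε ^ 2) ^ (q - 1) * (x i - zbar i) = 2 * A := by
    rw [hA, Finset.mul_sum]
    apply Finset.sum_congr rfl
    intro i _
    rw [hq]
    ring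
  rw [hq] at this
  linarith [hA0, this.ge, this.le]
end
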